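/- Let (i₁,t₁,S₁) and (i₂,t₂,S₂) be vine curve triples and k₁, k₂ ∈ ℤ. If H(i₁,t₁,S₁;k₁) = H(i₂,t₂,S₂;k₂) (as subsets of W), then S₁ = S₂. -/

import Mathlib

/-!
For `t ≥ 2` the wall `H(i,t,S;k)` is a level set of the affine function
`y ↦ a·∑_S y + b·(d - ∑_{Sᶜ} y)`, whose coefficients satisfy `a + b = 1`.
Moving weight `c` from a marking outside `S` onto one inside `S` therefore raises it by exactly
`c`, while moving weight between two markings of the same side leaves it unchanged. If
`j ∈ S₁ \ S₂`, moving weight from `j` onto the marking `1 ∈ S₁ ∩ S₂` preserves `H(i₁,t₁,S₁;k₁)`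
but moves every point off `H(i₂,t₂,S₂;k₂)`, so the walls differ. A wall with `t = 1` is a
coordinate hyperplane in the `x`-variables; it cannot be a wall with `t ≥ 2`, because the latter
depends nontrivially on `y` (if `a = 0` then `(i,t) = (g-1,2)`, so `Sᶜ ≠ ∅` and `b = 1`).
-/

namespace Paper

/-- A vine curve triple `(i,t,S)` for genus `g` and `n` markings
(markings are `{1,…,n}` and `S` always contains the first marking `1`). -/
def VineTriple (g n i t : ℕ) (S : Finset ℕ) : Prop :=
  i ≤ g ∧ 1 ≤ t ∧ i + t ≤ g + 1 ∧ S ⊆ Finset.Icc 1 n ∧ 1 ∈ S ∧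
  ((i = 0 ∧ t = 1) → 2 ≤ S.card) ∧
  ((i = 0 ∧ t = 2) → 1 ≤ S.card) ∧
  ((i = g ∧ t = 1) → 2 ≤ (Finset.Icc 1 n \ S).card) ∧
  ((i = g - 1 ∧ t = 2) → 1 ≤ (Finset.Icc 1 n \ S).card)

/-- The stability hyperplane `H(i,t,S;k)` inside the space `W` with
coordinates `x(i,S)` (for divisorial vine triples) and `y j` (for markings):
for `t = 1` it is `{x(i,S) = k + 1/2}`, and for `t ≥ 2` it is the affine
hyperplane from equation (walls2) of the paper. -/
noncomputable def Hyp (g n : ℕ) (d : ℤ) (i t : ℕ) (S : Finset ℕ) (k : ℤ) :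
    Set (((ℕ × Finset ℕ) → ℝ) × (ℕ → ℝ)) :=
  if t = 1 then
    {w | w.1 (i, S) = (k : ℝ) + 1 / 2}
  else
    {w | ((2 * (g : ℝ) - 2 * (i : ℝ) - (t : ℝ)) / (2 * (g : ℝ) - 2)) *
          (∑ j ∈ S, w.2 j) +
        ((2 * (i : ℝ) - 2 + (t : ℝ)) / (2 * (g : ℝ) - 2)) *
          ((d : ℝ) - ∑ j ∈ Finset.Icc 1 n \ S, w.2 j) =
        (k : ℝ) + (t : ℝ) / 2}

open Finset

section Walls

variable (g n : ℕ) (d : ℤ) (i t : ℕ) (S : Finset ℕ)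

noncomputable def wallCoeff : ℝ :=
  (2 * (g : ℝ) - 2 * (i : ℝ) - (t : ℝ)) / (2 * (g : ℝ) - 2)

noncomputable def wallCoeffCompl : ℝ :=
  (2 * (i : ℝ) - 2 + (t : ℝ)) / (2 * (g : ℝ) - 2)

noncomputable def wallForm (y : ℕ → ℝ) : ℝ :=
  wallCoeff g i t * ∑ j ∈ S, y j +
    wallCoeffCompl g i t * ((d : ℝ) - ∑ j ∈ Icc 1 n \ S, y j)

variable {g n d i t S}

theorem hyp_one {k : ℤ} : Hyp g n d i 1 S k = {w | w.1 (i, S) = (k : ℝ) + 1 / 2} :=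
  if_pos rfl

theorem hyp_of_ne_one (ht : t ≠ 1) {k : ℤ} :
    Hyp g n d i t S k = {w | wallForm g n d i t S w.2 = (k : ℝ) + (t : ℝ) / 2} :=
  if_neg ht

theorem two_mul_sub_two_ne_zero (hg : g ≠ 1) : 2 * (g : ℝ) - 2 ≠ 0 := by
  have : (g : ℝ) ≠ 1 := by exact_mod_cast hg
  contrapose! this
  linarith

theorem wallCoeff_add_wallCoeffCompl (hg : g ≠ 1) :
    wallCoeff g i t + wallCoeffCompl g i t = 1 := by
  rw [wallCoeff, wallCoeffCompl, ← add_div, div_eq_one_iff_eq (two_mul_sub_two_ne_zero hg)]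
  ring

theorem wallForm_add_single_of_mem {j : ℕ} (hj : j ∈ S) (y : ℕ → ℝ) (c : ℝ) :
    wallForm g n d i t S (y + Pi.single j c) = wallForm g n d i t S y + wallCoeff g i t * c := by
  have hj' : j ∉ Icc 1 n \ S := fun h => (mem_sdiff.1 h).2 hj
  simp only [wallForm, Pi.add_apply, sum_add_distrib, sum_pi_single', if_pos hj, if_neg hj']
  ring

theorem wallForm_add_single_of_mem_compl {j : ℕ} (hj : j ∈ Icc 1 n \ S) (y : ℕ → ℝ) (c : ℝ) :
    wallForm g n d i t S (y + Pi.single j c) =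
      wallForm g n d i t S y - wallCoeffCompl g i t * c := by
  have hj' : j ∉ S := (mem_sdiff.1 hj).2
  simp only [wallForm, Pi.add_apply, sum_add_distrib, sum_pi_single', if_pos hj, if_neg hj']
  ring

theorem VineTriple.eq_of_wallCoeff_eq_zero (h : VineTriple g n i t S) (hg : g ≠ 1)
    (ha : wallCoeff g i t = 0) : i = g - 1 ∧ t = 2 := by
  obtain ⟨-, ht₁, hit, -⟩ := h
  have hnum : 2 * (g : ℝ) - 2 * (i : ℝ) - (t : ℝ) = 0 :=
    (div_eq_zero_iff.1 ha).resolve_right (two_mul_sub_two_ne_zero hg)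
  have : 2 * g = 2 * i + t := by exact_mod_cast (by linarith : (2 * g : ℝ) = 2 * i + t)
  omega

theorem VineTriple.exists_wallForm_add_single (d : ℤ) (h : VineTriple g n i t S) (hg : g ≠ 1) :
    ∃ j, ∃ m ≠ 0, ∀ (y : ℕ → ℝ) (c : ℝ),
      wallForm g n d i t S (y + Pi.single j c) = wallForm g n d i t S y + m * c := by
  by_cases ha : wallCoeff g i t = 0
  · obtain ⟨j, hj⟩ := card_pos.1 (h.2.2.2.2.2.2.2.2 (h.eq_of_wallCoeff_eq_zero hg ha))
    have hb : wallCoeffCompl g i t = 1 := by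
      linarith [wallCoeff_add_wallCoeffCompl (i := i) (t := t) hg]
    refine ⟨j, -1, by norm_num, fun y c => ?_⟩
    rw [wallForm_add_single_of_mem_compl hj, hb]
    ring
  · exact ⟨1, wallCoeff g i t, ha, wallForm_add_single_of_mem h.2.2.2.2.1⟩

end Walls

theorem eq_of_hyp_one_eq_hyp_one {g n : ℕ} {d : ℤ} {i₁ i₂ : ℕ} {S₁ S₂ : Finset ℕ} {k₁ k₂ : ℤ}
    (hH : Hyp g n d i₁ 1 S₁ k₁ = Hyp g n d i₂ 1 S₂ k₂) : (i₁, S₁) = (i₂, S₂) := by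
  by_contra hne
  set x := Function.update (fun _ : ℕ × Finset ℕ => (k₂ : ℝ) + 3 / 2) (i₁, S₁)
    ((k₁ : ℝ) + 1 / 2)
  have hx : (x, (0 : ℕ → ℝ)) ∈ Hyp g n d i₂ 1 S₂ k₂ := by
    rw [← hH, hyp_one]
    show x (i₁, S₁) = _
    exact Function.update_self _ _ _
  rw [hyp_one] at hx
  have : x (i₂, S₂) = (k₂ : ℝ) + 3 / 2 := Function.update_of_ne (Ne.symm hne) _ _
  linarith [hx.symm.trans this]

theorem hyp_one_ne_hyp_of_ne_one {g n : ℕ} {d : ℤ} (hg : g ≠ 1) {i₁ i₂ t₂ : ℕ} {S₁ S₂ : Finset ℕ}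
    {k₁ k₂ : ℤ} (h₂ : VineTriple g n i₂ t₂ S₂) (ht₂ : t₂ ≠ 1) :
    Hyp g n d i₁ 1 S₁ k₁ ≠ Hyp g n d i₂ t₂ S₂ k₂ := by
  intro hH
  obtain ⟨j, m, hm, hslope⟩ := h₂.exists_wallForm_add_single d hg
  have hline : ∀ c : ℝ,
      wallForm g n d i₂ t₂ S₂ (0 + Pi.single j c) = (k₂ : ℝ) + (t₂ : ℝ) / 2 := by
    intro c
    have : ((fun _ => (k₁ : ℝ) + 1 / 2), 0 + Pi.single j c) ∈ Hyp g n d i₁ 1 S₁ k₁ := by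
      rw [hyp_one]
      rfl
    rwa [hH, hyp_of_ne_one ht₂] at this
  have h0 := hline 0
  have h1 := hline 1
  rw [hslope] at h0 h1
  exact hm (by linarith)

theorem subset_of_hyp_eq {g n : ℕ} {d : ℤ} (hg : g ≠ 1) {i₁ t₁ i₂ t₂ : ℕ} {S₁ S₂ : Finset ℕ}
    {k₁ k₂ : ℤ} (ht₁ : t₁ ≠ 1) (ht₂ : t₂ ≠ 1) {p : ℕ} (hp₁ : p ∈ S₁) (hp₂ : p ∈ S₂)
    (hS₁ : S₁ ⊆ Icc 1 n) (hH : Hyp g n d i₁ t₁ S₁ k₁ = Hyp g n d i₂ t₂ S₂ k₂) : S₁ ⊆ S₂ := by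
  intro j hj₁
  by_contra hj₂
  have hj : j ∈ Icc 1 n \ S₂ := mem_sdiff.2 ⟨hS₁ hj₁, hj₂⟩
  set transfer : ℝ → (ℕ → ℝ) → (ℕ → ℝ) := fun c y => y + Pi.single p c + Pi.single j (-c)
  have hF₁ : ∀ c y, wallForm g n d i₁ t₁ S₁ (transfer c y) = wallForm g n d i₁ t₁ S₁ y := by
    intro c y
    simp only [transfer, wallForm_add_single_of_mem hj₁, wallForm_add_single_of_mem hp₁]
    ring
  have hF₂ : ∀ c y, wallForm g n d i₂ t₂ S₂ (transfer c y) = wallForm g n d i₂ t₂ S₂ y + c := by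
    intro c y
    simp only [transfer, wallForm_add_single_of_mem_compl hj, wallForm_add_single_of_mem hp₂]
    linear_combination c * wallCoeff_add_wallCoeffCompl (i := i₂) (t := t₂) hg
  simp only [Set.ext_iff, hyp_of_ne_one ht₁, hyp_of_ne_one ht₂,
    Set.mem_ofPred_eq] at hH
  set r := (k₂ : ℝ) + (t₂ : ℝ) / 2
  set y₀ := transfer (r - wallForm g n d i₂ t₂ S₂ 0) 0
  have hy₀ : wallForm g n d i₂ t₂ S₂ y₀ = r := by rw [hF₂]; ring
  have hy₁ : wallForm g n d i₂ t₂ S₂ (transfer 1 y₀) = r :=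
    (hH (0, transfer 1 y₀)).1 ((hF₁ 1 y₀).trans ((hH (0, y₀)).2 hy₀))
  rw [hF₂, hy₀] at hy₁
  linarith

theorem hyperplanes_eq_imp_markings_eq_general (g n : ℕ) (d : ℤ) (hg : 2 ≤ g)
    (i₁ t₁ i₂ t₂ : ℕ) (S₁ S₂ : Finset ℕ) (k₁ k₂ : ℤ)
    (h₁ : VineTriple g n i₁ t₁ S₁) (h₂ : VineTriple g n i₂ t₂ S₂)
    (hH : Hyp g n d i₁ t₁ S₁ k₁ = Hyp g n d i₂ t₂ S₂ k₂) :
    S₁ = S₂ := by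
  have hg : g ≠ 1 := by omega
  by_cases ht₁ : t₁ = 1 <;> by_cases ht₂ : t₂ = 1
  · subst ht₁ ht₂
    exact congrArg Prod.snd (eq_of_hyp_one_eq_hyp_one hH)
  · subst ht₁
    exact (hyp_one_ne_hyp_of_ne_one hg h₂ ht₂ hH).elim
  · subst ht₂
    exact (hyp_one_ne_hyp_of_ne_one hg h₁ ht₁ hH.symm).elim
  · exact (subset_of_hyp_eq hg ht₁ ht₂ h₁.2.2.2.2.1 h₂.2.2.2.2.1 h₁.2.2.2.1 hH).antisymm
      (subset_of_hyp_eq hg ht₂ ht₁ h₂.2.2.2.2.1 h₁.2.2.2.2.1 h₂.2.2.2.1 hH.symm)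

/-- Proposition: if two stability hyperplanes indexed by vine curve triples
coincide, then the corresponding subsets of markings coincide. -/
theorem hyperplanes_eq_imp_markings_eq (g n : ℕ) (d : ℤ) (hg : 2 ≤ g) (hn : 1 ≤ n)
    (i₁ t₁ i₂ t₂ : ℕ) (S₁ S₂ : Finset ℕ) (k₁ k₂ : ℤ)
    (h₁ : VineTriple g n i₁ t₁ S₁) (h₂ : VineTriple g n i₂ t₂ S₂)
    (hH : Hyp g n d i₁ t₁ S₁ k₁ = Hyp g n d i₂ t₂ S₂ k₂) :
    S₁ = S₂ :=
  hyperplanes_eq_imp_markings_eq_general g n d hg i₁ t₁ i₂ t₂ S₁ S₂ k₁ k₂ h₁ h₂ hH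

end Paper
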